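/- Let c_n be the number of closable Motzkin trees with exactly n nodes and let C = Σ_{n≥0} c_n z^n be the corresponding formal power series with rational coefficients. Then C satisfies the algebraic equation z²·C⁴ − 2z·C³ + (−z² + z + 1)·C² + (z − 1)·C + z² = 0 in the ring of formal power series. -/

import Mathlib

/-- Motzkin trees (binary-unary trees): leaf `v`, unary `l`, binary `a`. -/
inductive Mot : Type
  | v : Mot
  | l : Mot → Mot
  | a : Mot → Mot → Mot
deriving DecidableEq

/-- Lambda terms in de Bruijn form. -/
inductive Lam : Type
  | v : Nat → Lam
  | l : Lam → Lam
  | a : Lam → Lam → Lam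
deriving DecidableEq

/-- `t` is closed at depth `d`. -/
def Lam.closedAt : Lam → Nat → Prop
  | .v i, d => i < d
  | .l t, d => t.closedAt (d + 1)
  | .a s t, d => s.closedAt d ∧ t.closedAt d

/-- The Motzkin-tree skeleton of a de Bruijn term. -/
def Lam.skel : Lam → Mot
  | .v _ => .v
  | .l t => .l t.skel
  | .a s t => .a s.skel t.skel

/-- Total node count of a Motzkin tree. -/
def Mot.nodes : Mot → ℕ
  | .v => 1
  | .l t => 1 + t.nodes
  | .a s t => 1 + s.nodes + t.nodes

/-- A Motzkin tree is closable if it is the skeleton of at least one closed term. -/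
def Mot.Closable (X : Mot) : Prop := ∃ t : Lam, t.closedAt 0 ∧ t.skel = X

/-- `c n` is the number of closable Motzkin trees with exactly `n` nodes. -/
noncomputable def c (n : ℕ) : ℕ := Nat.card {t : Mot // t.nodes = n ∧ t.Closable}

/-- The ordinary generating function of the `c n`, as a formal power series over ℚ. -/
noncomputable def C : PowerSeries ℚ := PowerSeries.mk fun n => (c n : ℚ)

/-!
A bare leaf is not closable, `l t` always is (label every leaf of `t` by `0`), and `a s t` is
closable iff `s` and `t` are. Hence `C = z (M + C²)`, where the Motzkin series satisfies
`M = z (1 + M + M²)`; eliminating `M` yields the quartic.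
-/

section WeightedTypes

open PowerSeries Finset

variable {α β : Type*}

/-- `Nat.card` is `0` on infinite fibres; the `Northcott` hypotheses below exclude these. -/
noncomputable def ogf (w : α → ℕ) : PowerSeries ℚ :=
  PowerSeries.mk fun n => (Nat.card {x // w x = n} : ℚ)

theorem coeff_ogf (w : α → ℕ) (n : ℕ) : coeff n (ogf w) = Nat.card {x // w x = n} :=
  coeff_mk _ _

theorem finite_fiber_of_northcott {w : α → ℕ} (hw : Northcott w) (n : ℕ) :
    Finite {x // w x = n} :=
  ((hw.finite_le n).subset fun _ hx => le_of_eq hx).to_subtype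

theorem northcott_sumElim {w : α → ℕ} {w' : β → ℕ} (hw : Northcott w) (hw' : Northcott w') :
    Northcott (Sum.elim w w') where
  finite_le n := (((hw.finite_le n).image Sum.inl).union ((hw'.finite_le n).image Sum.inr)).subset
    (by rintro (x | y) h <;> simpa using h)

theorem northcott_add_prod {w : α → ℕ} {w' : β → ℕ} (hw : Northcott w) (hw' : Northcott w') :
    Northcott fun p : α × β => w p.1 + w' p.2 where
  finite_le n := ((hw.finite_le n).prod (hw'.finite_le n)).subset
    fun p (h : w p.1 + w' p.2 ≤ n) => ⟨show w p.1 ≤ n by omega, show w' p.2 ≤ n by omega⟩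

theorem ogf_unit_zero : ogf (fun _ : Unit => 0) = 1 := by
  ext n
  rcases n with _ | n
  · simp [coeff_ogf]
  · simp [coeff_ogf, coeff_one]

theorem ogf_sumElim {w : α → ℕ} {w' : β → ℕ} (hw : Northcott w) (hw' : Northcott w') :
    ogf (Sum.elim w w') = ogf w + ogf w' := by
  ext n
  have := finite_fiber_of_northcott hw n
  have := finite_fiber_of_northcott hw' n
  simp [coeff_ogf, Nat.card_congr Equiv.subtypeSum, Nat.card_sum]

def fiberProdEquiv (w : α → ℕ) (w' : β → ℕ) (n : ℕ) :
    {p : α × β // w p.1 + w' p.2 = n} ≃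
      Σ ij : antidiagonal n, {x // w x = ij.1.1} × {y // w' y = ij.1.2} where
  toFun p := ⟨⟨(w p.1.1, w' p.1.2), mem_antidiagonal.2 p.2⟩, ⟨p.1.1, rfl⟩, ⟨p.1.2, rfl⟩⟩
  invFun q := ⟨(q.2.1, q.2.2), by rw [q.2.1.2, q.2.2.2]; exact mem_antidiagonal.1 q.1.2⟩
  left_inv _ := rfl
  right_inv := by
    rintro ⟨⟨⟨i, j⟩, hij⟩, ⟨x, hx⟩, ⟨y, hy⟩⟩
    dsimp only at hx hy
    subst hx hy
    rfl

theorem ogf_add_prod {w : α → ℕ} {w' : β → ℕ} (hw : Northcott w) (hw' : Northcott w') :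
    ogf (fun p : α × β => w p.1 + w' p.2) = ogf w * ogf w' := by
  ext n
  have := finite_fiber_of_northcott hw
  have := finite_fiber_of_northcott hw'
  rw [coeff_ogf, Nat.card_congr (fiberProdEquiv w w' n), Nat.card_sigma, coeff_mul,
    ← sum_coe_sort (antidiagonal n)]
  simp [coeff_ogf, Nat.card_prod]

theorem ogf_eq_X_mul {w : α → ℕ} {w' : β → ℕ} (e : α ≃ β) (he : ∀ x, w x = w' (e x) + 1) :
    ogf w = X * ogf w' := by
  ext n
  rcases n with _ | n
  · have : IsEmpty {x // w x = 0} := ⟨fun x => by simpa [he] using x.2⟩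
    simp [coeff_ogf]
  · rw [coeff_succ_X_mul, coeff_ogf, coeff_ogf]
    exact_mod_cast Nat.card_congr (e.subtypeEquiv fun x => by rw [he]; omega)

end WeightedTypes

namespace Mot

open PowerSeries

theorem nodes_pos : ∀ t : Mot, 0 < t.nodes
  | .v => one_pos
  | .l _ | .a _ _ => by simp [nodes]

instance : Northcott nodes where
  finite_le n := by
    induction n with
    | zero =>
      exact Set.finite_empty.subset fun t (h : t.nodes ≤ 0) => absurd h t.nodes_pos.not_ge
    | succ n ih =>
      refine ((Set.finite_singleton v).union ((ih.image l).union (ih.image2 a ih))).subset ?_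
      rintro (_ | s | ⟨s, t⟩) h <;> simp [nodes] at h ⊢
      · omega
      · have := s.nodes_pos; have := t.nodes_pos; omega

def equivSum : Mot ≃ Unit ⊕ Mot ⊕ Mot × Mot where
  toFun
    | v => .inl ()
    | l t => .inr (.inl t)
    | a s t => .inr (.inr (s, t))
  invFun
    | .inl () => v
    | .inr (.inl t) => l t
    | .inr (.inr (s, t)) => a s t
  left_inv := by rintro (_ | _ | _) <;> rfl
  right_inv := by rintro (_ | _ | _) <;> rfl

theorem ogf_nodes : ogf nodes = X * (1 + ogf nodes + ogf nodes ^ 2) := by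
  have hpair : Northcott fun p : Mot × Mot => p.1.nodes + p.2.nodes :=
    northcott_add_prod inferInstance inferInstance
  calc ogf nodes
      = X * ogf (Sum.elim (fun _ => 0) (Sum.elim nodes fun p => p.1.nodes + p.2.nodes)) :=
        ogf_eq_X_mul equivSum (by rintro (_ | s | ⟨s, t⟩) <;> simp [equivSum, nodes] <;> omega)
    _ = X * (1 + ogf nodes + ogf nodes ^ 2) := by
        rw [ogf_sumElim ⟨fun _ => Set.toFinite _⟩ (northcott_sumElim inferInstance hpair),
          ogf_sumElim inferInstance hpair, ogf_add_prod inferInstance inferInstance, ogf_unit_zero,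
          sq, add_assoc]

def fill : Mot → Lam
  | v => .v 0
  | l t => .l t.fill
  | a s t => .a s.fill t.fill

theorem fill_closedAt : ∀ (t : Mot) {d : ℕ}, 0 < d → t.fill.closedAt d
  | v, _, hd => hd
  | l t, _, _ => t.fill_closedAt (Nat.succ_pos _)
  | a s t, _, hd => ⟨s.fill_closedAt hd, t.fill_closedAt hd⟩

theorem skel_fill : ∀ t : Mot, t.fill.skel = t
  | v => rfl
  | l t => congrArg l t.skel_fill
  | a s t => congrArg₂ a s.skel_fill t.skel_fill

theorem not_closable_v : ¬ v.Closable := by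
  rintro ⟨_ | _ | _, hclosed, hskel⟩
  · exact Nat.not_lt_zero _ hclosed
  all_goals cases hskel

theorem closable_l (t : Mot) : (l t).Closable :=
  ⟨.l t.fill, t.fill_closedAt one_pos, congrArg l t.skel_fill⟩

theorem closable_a_iff {s t : Mot} : (a s t).Closable ↔ s.Closable ∧ t.Closable := by
  constructor
  · rintro ⟨_ | _ | ⟨u, u'⟩, hclosed, hskel⟩ <;> cases hskel
    exact ⟨⟨u, hclosed.1, rfl⟩, ⟨u', hclosed.2, rfl⟩⟩
  · rintro ⟨⟨u, hu, rfl⟩, ⟨u', hu', rfl⟩⟩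
    exact ⟨.a u u', ⟨hu, hu'⟩, rfl⟩

def closableEquiv :
    {t : Mot // t.Closable} ≃ Mot ⊕ {t : Mot // t.Closable} × {t : Mot // t.Closable} where
  toFun
    | ⟨v, h⟩ => absurd h not_closable_v
    | ⟨l t, _⟩ => .inl t
    | ⟨a s t, h⟩ => .inr (⟨s, (closable_a_iff.1 h).1⟩, ⟨t, (closable_a_iff.1 h).2⟩)
  invFun
    | .inl t => ⟨l t, closable_l t⟩
    | .inr (s, t) => ⟨a s t, closable_a_iff.2 ⟨s.2, t.2⟩⟩
  left_inv := by
    rintro ⟨_ | _ | _, h⟩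
    · exact absurd h not_closable_v
    all_goals rfl
  right_inv := by rintro (_ | ⟨_, _⟩) <;> rfl

def closableNodes (t : {t : Mot // t.Closable}) : ℕ := t.1.nodes

instance : Northcott closableNodes where
  finite_le n := (Northcott.finite_le (h := nodes) n).preimage Subtype.val_injective.injOn

theorem ogf_closableNodes : ogf closableNodes = X * (ogf nodes + ogf closableNodes ^ 2) :=
  calc ogf closableNodes
      = X * ogf (Sum.elim nodes fun p : _ × _ => closableNodes p.1 + closableNodes p.2) := by
        refine ogf_eq_X_mul closableEquiv ?_
        rintro ⟨_ | _ | _, h⟩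
        · exact absurd h not_closable_v
        all_goals simp [closableEquiv, closableNodes, nodes]; omega
    _ = X * (ogf nodes + ogf closableNodes ^ 2) := by
        rw [ogf_sumElim inferInstance (northcott_add_prod inferInstance inferInstance),
          ogf_add_prod inferInstance inferInstance, sq]

end Mot

theorem C_eq_ogf_closableNodes : C = ogf Mot.closableNodes := by
  ext n
  rw [coeff_ogf, C, PowerSeries.coeff_mk, c]
  exact_mod_cast Nat.card_congr
    ((Equiv.subtypeEquivRight fun _ => and_comm).trans
      (Equiv.subtypeSubtypeEquivSubtypeInter _ _).symm)

theorem stmt10 :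
    (PowerSeries.X : PowerSeries ℚ) ^ 2 * C ^ 4 - 2 * PowerSeries.X * C ^ 3 +
      (-PowerSeries.X ^ 2 + PowerSeries.X + 1) * C ^ 2 +
      (PowerSeries.X - 1) * C + PowerSeries.X ^ 2 = 0 := by
  have hM := Mot.ogf_nodes
  -- `M := ogf Mot.nodes` is eliminated through `X * M = C - X * C ^ 2`.
  have hC : C = PowerSeries.X * (ogf Mot.nodes + C ^ 2) :=
    C_eq_ogf_closableNodes ▸ Mot.ogf_closableNodes
  linear_combination (-PowerSeries.X) * hM +
    (C - PowerSeries.X * C ^ 2 + PowerSeries.X * ogf Mot.nodes - 1 + PowerSeries.X) * hC
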